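/- Let D be an integral domain. (1) If D contains a nonzero nonunit comparable element, then for every nonzero nonunit comparable element x of D the ideal Q := ⋂_{n ≥ 0} x^n D is a prime ideal such that D/Q is a valuation domain and Q = QD_Q. (2) Conversely, if there is a nonzero element x of D such that Q := ⋂_{n ≥ 0} x^n D is a prime ideal, D/Q is a valuation domain, and Q = QD_Q, then D is a t-local domain and x is a comparable element of D. -/

import Mathlib

open scoped nonZeroDivisors

/-- The `t`-closure of a fractional ideal `E` of an integral domain `D`:
the union (here: supremum, which is a directed union) of `F^v = (F⁻¹)⁻¹` over all
nonzero finitely generated fractional subideals `F` of `E`, viewed as a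
`D`-submodule of the fraction field of `D`. -/
noncomputable def tClos (D : Type*) [CommRing D] [IsDomain D]
    (E : FractionalIdeal D⁰ (FractionRing D)) : Submodule D (FractionRing D) :=
  ⨆ F ∈ {F : FractionalIdeal D⁰ (FractionRing D) |
      F ≠ 0 ∧ F ≤ E ∧ (F : Submodule D (FractionRing D)).FG},
    (((F⁻¹)⁻¹ : FractionalIdeal D⁰ (FractionRing D)) : Submodule D (FractionRing D))

/-- An integral ideal `I` of an integral domain `D` is a `t`-ideal if `I = I^t`. -/
def Ideal.IsT {D : Type*} [CommRing D] [IsDomain D] (I : Ideal D) : Prop :=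
  ((I : FractionalIdeal D⁰ (FractionRing D)) : Submodule D (FractionRing D)) = tClos D I

/-- A nonzero element `c` of a domain `D` is comparable if for every `x ∈ D`,
either `cD ⊆ xD` or `xD ⊆ cD`. -/
def IsComparable {D : Type*} [CommRing D] (c : D) : Prop :=
  c ≠ 0 ∧ ∀ x : D, Ideal.span {c} ≤ Ideal.span {x} ∨ Ideal.span {x} ≤ Ideal.span {c}

/-- An integral domain is `t`-local if it is local and its maximal ideal is a `t`-ideal. -/
def IsTLocal (A : Type*) [CommRing A] [IsDomain A] : Prop :=
  ∃ h : IsLocalRing A, Ideal.IsT (@IsLocalRing.maximalIdeal A _ h)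

/-!
Call `c` dvd-comparable if every `y` satisfies `y ∣ c` or `c ∣ y`; for `c ≠ 0` this is
`IsComparable c`. Such elements are closed under products, and a divisor `a` of a nonzero one
`c = a * u` is again one: compare `c` with `b * u` and cancel `u`. So for a comparable nonunit `x`
the elements outside `Q = ⋂ xⁿD`, which are exactly the divisors of the powers of `x`, form a
multiplicative set of comparable elements. For a prime `P`, comparability of every element outside
`P` is equivalent to `D/P` being a valuation domain with `P = PD_P`; this gives (1). For (2) it
makes `D` local, and a finitely generated ideal inside the maximal ideal `M` either lies in
`Q ⊆ xD` or is principal, so its `v`-closure stays inside a principal ideal contained in `M`.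
-/

open Ideal

section Comparable

variable {α : Type*}

def IsDvdComparable [Monoid α] (c : α) : Prop :=
  ∀ y : α, y ∣ c ∨ c ∣ y

theorem isComparable_iff {D : Type*} [CommRing D] {c : D} :
    IsComparable c ↔ c ≠ 0 ∧ IsDvdComparable c := by
  simp only [IsComparable, IsDvdComparable, span_singleton_le_span_singleton]

theorem IsDvdComparable.one [Monoid α] : IsDvdComparable (1 : α) :=
  fun y => Or.inr (one_dvd y)

theorem IsDvdComparable.mul [CommMonoid α] {c d : α} (hc : IsDvdComparable c)
    (hd : IsDvdComparable d) : IsDvdComparable (c * d) := by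
  intro y
  rcases hc y with hyc | ⟨z, rfl⟩
  · exact Or.inl (hyc.mul_right d)
  · exact (hd z).imp (mul_dvd_mul_left c) (mul_dvd_mul_left c)

theorem IsDvdComparable.pow [CommMonoid α] {c : α} (hc : IsDvdComparable c) (n : ℕ) :
    IsDvdComparable (c ^ n) := by
  induction n with
  | zero => rw [pow_zero]; exact .one
  | succ n ih => rw [pow_succ]; exact ih.mul hc

theorem IsDvdComparable.of_dvd [CommMonoidWithZero α] [IsCancelMulZero α] {a c : α}
    (hc : IsDvdComparable c) (hc0 : c ≠ 0) (hac : a ∣ c) : IsDvdComparable a := by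
  obtain ⟨u, rfl⟩ := hac
  have hu : u ≠ 0 := right_ne_zero_of_mul hc0
  intro b
  exact (hc (b * u)).imp (mul_dvd_mul_iff_right hu).1 (mul_dvd_mul_iff_right hu).1

end Comparable

section PrimeIdeal

variable {D : Type*} [CommRing D] {P : Ideal D}

theorem le_span_singleton_of_notMem (hP : ∀ a ∉ P, IsDvdComparable a) {g : D} (hg : g ∉ P) :
    P ≤ span {g} := by
  intro b hb
  rcases hP g hg b with hbg | hgb
  · exact absurd (P.mem_of_dvd hbg hb) hg
  · exact mem_span_singleton.2 hgb

theorem dvd_of_mk_dvd_mk (hPD : ∀ p ∈ P, ∀ s ∉ P, ∃ q ∈ P, p = s * q) {s b : D} (hs : s ∉ P)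
    (h : Ideal.Quotient.mk P s ∣ Ideal.Quotient.mk P b) : s ∣ b := by
  obtain ⟨c, hc⟩ := h
  obtain ⟨c, rfl⟩ := Ideal.Quotient.mk_surjective c
  rw [← map_mul, Ideal.Quotient.eq] at hc
  obtain ⟨q, -, hq⟩ := hPD _ hc s hs
  exact ⟨c + q, by linear_combination hq⟩

theorem forall_notMem_isDvdComparable_iff [P.IsPrime] :
    (∀ a ∉ P, IsDvdComparable a) ↔
      ValuationRing (D ⧸ P) ∧ ∀ p ∈ P, ∀ s ∉ P, ∃ q ∈ P, p = s * q := by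
  constructor
  · intro hP
    refine ⟨ValuationRing.iff_dvd_total.2 ⟨fun a b => ?_⟩, fun p hp s hs => ?_⟩
    · obtain ⟨a, rfl⟩ := Ideal.Quotient.mk_surjective a
      obtain ⟨b, rfl⟩ := Ideal.Quotient.mk_surjective b
      by_cases ha : a ∈ P
      · rw [Ideal.Quotient.eq_zero_iff_mem.2 ha]
        exact Or.inr (dvd_zero _)
      · exact (hP a ha b).symm.imp (map_dvd (Ideal.Quotient.mk P)) (map_dvd (Ideal.Quotient.mk P))
    · obtain ⟨q, rfl⟩ := (hP s hs p).resolve_left fun hps => hs (P.mem_of_dvd hps hp)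
      exact ⟨q, (‹P.IsPrime›.mem_or_mem hp).resolve_left hs, rfl⟩
  · rintro ⟨hval, hPD⟩ a ha b
    by_cases hb : b ∈ P
    · obtain ⟨q, -, rfl⟩ := hPD b hb a ha
      exact Or.inr (dvd_mul_right a q)
    · rcases ValuationRing.dvd_total (Ideal.Quotient.mk P a) (Ideal.Quotient.mk P b) with h | h
      · exact Or.inr (dvd_of_mk_dvd_mk hPD ha h)
      · exact Or.inl (dvd_of_mk_dvd_mk hPD hb h)

theorem isLocalRing_of_forall_notMem_isDvdComparable [Nontrivial D] (hP : P ≠ ⊤)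
    (hcomp : ∀ a ∉ P, IsDvdComparable a) : IsLocalRing D := by
  refine IsLocalRing.of_nonunits_add fun a b ha hb => ?_
  rw [mem_nonunits_iff] at ha hb ⊢
  have of_dvd_or_dvd : a ∣ b ∨ b ∣ a → ¬IsUnit (a + b) := by
    rintro (hab | hba) h
    · exact ha (isUnit_of_dvd_unit (dvd_add dvd_rfl hab) h)
    · exact hb (isUnit_of_dvd_unit (dvd_add hba dvd_rfl) h)
  by_cases haP : a ∈ P
  · by_cases hbP : b ∈ P
    · exact fun h => hP (P.eq_top_of_isUnit_mem (P.add_mem haP hbP) h)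
    · exact of_dvd_or_dvd (hcomp b hbP a)
  · exact of_dvd_or_dvd (hcomp a haP b).symm

theorem Ideal.FG.le_or_eq_span_singleton (hP : ∀ a ∉ P, IsDvdComparable a) {I : Ideal D}
    (hI : I.FG) : I ≤ P ∨ ∃ g ∉ P, I = span {g} := by
  induction I, hI using Submodule.fg_induction with
  | singleton a =>
    by_cases ha : a ∈ P
    · exact Or.inl ((span_singleton_le_iff_mem P).2 ha)
    · exact Or.inr ⟨a, ha, rfl⟩
  | sup I J _ _ hI hJ =>
    rcases hI with hIP | ⟨g, hg, rfl⟩ <;> rcases hJ with hJP | ⟨h, hh, rfl⟩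
    · exact Or.inl (sup_le hIP hJP)
    · exact Or.inr ⟨h, hh, sup_eq_right.2 (hIP.trans (le_span_singleton_of_notMem hP hh))⟩
    · exact Or.inr ⟨g, hg, sup_eq_left.2 (hJP.trans (le_span_singleton_of_notMem hP hg))⟩
    · rcases hP g hg h with hhg | hgh
      · exact Or.inr ⟨h, hh, sup_eq_right.2 (span_singleton_le_span_singleton.2 hhg)⟩
      · exact Or.inr ⟨g, hg, sup_eq_left.2 (span_singleton_le_span_singleton.2 hgh)⟩

end PrimeIdeal

section PowersIntersection

variable {D : Type*}

theorem mem_iInf_span_pow [CommSemiring D] {x a : D} :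
    a ∈ ⨅ n : ℕ, span {x ^ n} ↔ ∀ n : ℕ, x ^ n ∣ a := by
  simp only [Submodule.mem_iInf, mem_span_singleton]

variable [CommRing D] [IsDomain D] {x : D}

theorem notMem_iInf_span_pow_iff (hx : IsDvdComparable x) (hx0 : x ≠ 0) (hxu : ¬IsUnit x)
    {a : D} : a ∉ ⨅ n : ℕ, span {x ^ n} ↔ ∃ n : ℕ, a ∣ x ^ n := by
  rw [mem_iInf_span_pow, not_forall]
  constructor
  · rintro ⟨n, hn⟩
    exact ⟨n, ((hx.pow n) a).resolve_right hn⟩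
  · rintro ⟨n, hn⟩
    refine ⟨n + 1, fun h => ?_⟩
    have := (pow_dvd_pow_iff hx0 hxu).1 (h.trans hn)
    omega

theorem isPrime_iInf_span_pow (hx : IsDvdComparable x) (hx0 : x ≠ 0) (hxu : ¬IsUnit x) :
    (⨅ n : ℕ, span {x ^ n}).IsPrime := by
  refine isPrime_iff.2 ⟨(ne_top_iff_one _).2 ?_, fun {a b} hab => ?_⟩
  · exact (notMem_iInf_span_pow_iff hx hx0 hxu).2 ⟨0, one_dvd _⟩
  · by_contra! h
    obtain ⟨m, hm⟩ := (notMem_iInf_span_pow_iff hx hx0 hxu).1 h.1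
    obtain ⟨k, hk⟩ := (notMem_iInf_span_pow_iff hx hx0 hxu).1 h.2
    exact (notMem_iInf_span_pow_iff hx hx0 hxu).2 ⟨m + k, pow_add x m k ▸ mul_dvd_mul hm hk⟩ hab

theorem isDvdComparable_of_notMem_iInf_span_pow (hx : IsDvdComparable x) (hx0 : x ≠ 0)
    (hxu : ¬IsUnit x) {a : D} (ha : a ∉ ⨅ n : ℕ, span {x ^ n}) : IsDvdComparable a := by
  obtain ⟨n, hn⟩ := (notMem_iInf_span_pow_iff hx hx0 hxu).1 ha
  exact (hx.pow n).of_dvd (pow_ne_zero n hx0) hn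

theorem notMem_iInf_span_pow_self (hx0 : x ≠ 0) (hQ : ⨅ n : ℕ, span {x ^ n} ≠ ⊤) :
    x ∉ ⨅ n : ℕ, span {x ^ n} := by
  intro hxQ
  have hxx : x * x ∣ x * 1 := by simpa [pow_two] using mem_iInf_span_pow.1 hxQ 2
  exact hQ (eq_top_of_isUnit_mem _ hxQ (isUnit_of_dvd_one ((mul_dvd_mul_iff_left hx0).1 hxx)))

end PowersIntersection

section TIdeal

theorem FractionalIdeal.inv_inv_le_spanSingleton {R K : Type*} [CommRing R] [IsDomain R]
    [Field K] [Algebra R K] [IsFractionRing R K] {F : FractionalIdeal R⁰ K} {g : K}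
    (hF : F ≠ 0) (hFg : F ≤ spanSingleton R⁰ g) : (F⁻¹)⁻¹ ≤ spanSingleton R⁰ g := by
  have hg : spanSingleton R⁰ g ≠ 0 := fun h => hF (le_antisymm (h ▸ hFg) (zero_le F))
  have hginv : (spanSingleton R⁰ g)⁻¹ ≠ 0 := by
    rw [spanSingleton_inv, Ne, spanSingleton_eq_zero_iff, inv_eq_zero]
    exact fun h => hg (by rw [h, spanSingleton_zero])
  have hinv := inv_anti_mono hF hg hFg
  have hFinv : F⁻¹ ≠ 0 := fun h => hginv (le_antisymm (h ▸ hinv) (zero_le _))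
  simpa only [spanSingleton_inv, inv_inv] using inv_anti_mono hginv hFinv hinv

variable {D : Type*} [CommRing D] [IsDomain D]

theorem coe_le_tClos (E : FractionalIdeal D⁰ (FractionRing D)) :
    (E : Submodule D (FractionRing D)) ≤ tClos D E := by
  intro ξ hξ
  by_cases hξ0 : ξ = 0
  · exact hξ0 ▸ zero_mem _
  have hmem : FractionalIdeal.spanSingleton D⁰ ξ ∈ {F : FractionalIdeal D⁰ (FractionRing D) |
      F ≠ 0 ∧ F ≤ E ∧ (F : Submodule D (FractionRing D)).FG} :=
    ⟨FractionalIdeal.spanSingleton_eq_zero_iff.not.2 hξ0,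
      FractionalIdeal.spanSingleton_le_iff_mem.2 hξ,
      FractionalIdeal.coe_spanSingleton D⁰ ξ ▸ Submodule.fg_span_singleton ξ⟩
  have hvv : ξ ∈ ((FractionalIdeal.spanSingleton D⁰ ξ)⁻¹)⁻¹ := by
    simpa only [FractionalIdeal.spanSingleton_inv, inv_inv]
      using FractionalIdeal.mem_spanSingleton_self D⁰ ξ
  exact Submodule.mem_iSup_of_mem _ (Submodule.mem_iSup_of_mem hmem hvv)

theorem Ideal.isT_of_forall_fg_le_span_singleton {J : Ideal D}
    (h : ∀ I : Ideal D, I.FG → I ≤ J → ∃ g ∈ J, I ≤ span {g}) : J.IsT := by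
  refine le_antisymm (coe_le_tClos _) (iSup₂_le fun F ⟨hF0, hFJ, hFfg⟩ => ?_)
  obtain ⟨I, rfl⟩ := FractionalIdeal.le_one_iff_exists_coeIdeal.1
    (hFJ.trans FractionalIdeal.coeIdeal_le_one)
  rw [FractionalIdeal.coeIdeal_fg _ (IsFractionRing.injective D (FractionRing D))] at hFfg
  obtain ⟨g, hgJ, hIg⟩ := h I hFfg ((FractionalIdeal.coeIdeal_le_coeIdeal _).1 hFJ)
  have hIg' : (I : FractionalIdeal D⁰ (FractionRing D)) ≤
      FractionalIdeal.spanSingleton D⁰ (algebraMap D (FractionRing D) g) := by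
    rw [← FractionalIdeal.coeIdeal_span_singleton]
    exact (FractionalIdeal.coeIdeal_le_coeIdeal _).2 hIg
  refine FractionalIdeal.coe_le_coe.2 ((FractionalIdeal.inv_inv_le_spanSingleton hF0 hIg').trans ?_)
  rw [← FractionalIdeal.coeIdeal_span_singleton]
  exact (FractionalIdeal.coeIdeal_le_coeIdeal _).2 ((span_singleton_le_iff_mem J).2 hgJ)

theorem isTLocal_of_forall_notMem_isDvdComparable {P : Ideal D}
    (hP : ∀ a ∉ P, IsDvdComparable a) {x : D} (hxP : x ∉ P) (hxu : ¬IsUnit x) : IsTLocal D := by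
  have hPtop : P ≠ ⊤ := fun h => hxP (h ▸ Submodule.mem_top)
  have hloc := isLocalRing_of_forall_notMem_isDvdComparable hPtop hP
  refine ⟨hloc, isT_of_forall_fg_le_span_singleton fun I hI hIM => ?_⟩
  rcases hI.le_or_eq_span_singleton hP with hIP | ⟨g, -, rfl⟩
  · exact ⟨x, hxu, hIP.trans (le_span_singleton_of_notMem hP hxP)⟩
  · exact ⟨g, hIM (mem_span_singleton_self g), le_rfl⟩

end TIdeal

/-- Let `D` be an integral domain.
(1) If `D` contains a nonzero nonunit comparable element, then for every nonzero
nonunit comparable element `x` of `D`, the ideal `Q := ⋂_{n ≥ 0} xⁿD` is a prime ideal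
such that `D/Q` is a valuation domain and `Q = QD_Q`.
(2) Conversely, if there is a nonzero `x ∈ D` such that `Q := ⋂_{n ≥ 0} xⁿD` is a
prime ideal, `D/Q` is a valuation domain, and `Q = QD_Q`, then `D` is `t`-local and
`x` is a comparable element of `D`. -/
theorem comparable_iff_powers_intersection {D : Type*} [CommRing D] [IsDomain D] :
    ((∃ c : D, IsComparable c ∧ ¬ IsUnit c) →
      ∀ x : D, IsComparable x → ¬ IsUnit x →
        ∀ Q : Ideal D, Q = ⨅ n : ℕ, Ideal.span {x ^ n} →
          ∃ hp : Q.IsPrime,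
            (letI := hp; ValuationRing (D ⧸ Q)) ∧
            (∀ p ∈ Q, ∀ s ∉ Q, ∃ q ∈ Q, p = s * q)) ∧
    (∀ x : D, x ≠ 0 →
      ∀ Q : Ideal D, Q = ⨅ n : ℕ, Ideal.span {x ^ n} →
        ∀ hp : Q.IsPrime,
          (letI := hp; ValuationRing (D ⧸ Q)) →
          (∀ p ∈ Q, ∀ s ∉ Q, ∃ q ∈ Q, p = s * q) →
          IsTLocal D ∧ IsComparable x) := by
  refine ⟨fun _ x hx hxu Q hQ => ?_, fun x hx0 Q hQ hp hval hQDQ => ?_⟩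
  · obtain ⟨hx0, hxc⟩ := isComparable_iff.1 hx
    subst hQ
    have hp := isPrime_iInf_span_pow hxc hx0 hxu
    exact ⟨hp, forall_notMem_isDvdComparable_iff.1
      fun a ha => isDvdComparable_of_notMem_iInf_span_pow hxc hx0 hxu ha⟩
  · subst hQ
    have hcomp := forall_notMem_isDvdComparable_iff.2 ⟨hval, hQDQ⟩
    have hxQ := notMem_iInf_span_pow_self hx0 hp.ne_top
    have hxu : ¬IsUnit x := fun h => hxQ (mem_iInf_span_pow.2 fun n => (h.pow n).dvd)
    exact ⟨isTLocal_of_forall_notMem_isDvdComparable hcomp hxQ hxu,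
      isComparable_iff.2 ⟨hx0, hcomp x hxQ⟩⟩
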